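/- Let Ω ⊂ ℝⁿ be a proper open convex domain with Funk metric F_Ω, x ∈ Ω, ρ > 0. Then the backward open ball B⁻(x,ρ) = {y ∈ Ω : F_Ω(y,x) < ρ} equals Ω ∩ (x − (e^{ρ} − 1)(Ω − x)). -/

import Mathlib

open Real
open scoped Classical

/-- The Funk weak metric on a domain `Ω ⊆ ℝⁿ`: if the ray from `x` through `y`
meets the boundary `∂Ω` at a point `a = x + t • (y - x)` with `t ≥ 1`, then
`F_Ω(x,y) = log (|x - a| / |y - a|)`; otherwise (in particular if the ray is
contained in `Ω`, or if `x = y`) it is `0`. -/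
noncomputable def funk {n : ℕ} (Ω : Set (EuclideanSpace ℝ (Fin n)))
    (x y : EuclideanSpace ℝ (Fin n)) : ℝ :=
  if h : ∃ t : ℝ, 1 ≤ t ∧ x + t • (y - x) ∈ frontier Ω then
    Real.log (dist x (x + h.choose • (y - x)) / dist y (x + h.choose • (y - x)))
  else 0

/-! For `y ∈ Ω`, convexity makes the ray from `y` through `x` leave `Ω` at most once: if it meets
`∂Ω` at `y + T • (x - y)` then `T > 1`, the points of the ray in `Ω` are those with parameter
below `T`, and `F_Ω(y, x) = log (T / (T - 1))`. Hence `F_Ω(y, x) < ρ` iff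
`T > 1 + (exp ρ - 1)⁻¹`, i.e. iff `y + (1 + (exp ρ - 1)⁻¹) • (x - y) ∈ Ω`, which says exactly that
`y` is the image of a point of `Ω` under `z ↦ x - (exp ρ - 1) • (z - x)`. If the ray never meets
`∂Ω` it stays in `Ω` by connectedness, and both sides hold. -/

theorem IsOpen.exists_mem_frontier_of_mem_of_notMem {X : Type*} [TopologicalSpace X] {s : Set X}
    (hs : IsOpen s) {f : ℝ → X} (hf : Continuous f) {a b : ℝ} (hab : a ≤ b) (ha : f a ∈ s)
    (hb : f b ∉ s) : ∃ t ∈ Set.Icc a b, f t ∈ frontier s := by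
  by_contra! hfr
  have hcover : f '' Set.Icc a b ⊆ s ∪ (closure s)ᶜ := by
    rintro _ ⟨t, ht, rfl⟩
    by_cases hts : f t ∈ s
    · exact Or.inl hts
    · exact Or.inr fun hcl => hfr t ht ⟨hcl, by rwa [hs.interior_eq]⟩
  have hsub := (isPreconnected_Icc.image f hf.continuousOn).subset_left_of_subset_union hs
    isClosed_closure.isOpen_compl (Set.disjoint_compl_right_iff_subset.2 subset_closure) hcover
    ⟨f a, ⟨a, Set.left_mem_Icc.2 hab, rfl⟩, ha⟩
  exact hb (hsub ⟨b, Set.right_mem_Icc.2 hab, rfl⟩)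

section Ray

variable {E : Type*} [AddCommGroup E] [Module ℝ E] [TopologicalSpace E] [IsTopologicalAddGroup E]
  [ContinuousConstSMul ℝ E] {s : Set E} {y v : E} {r t : ℝ}

theorem Convex.add_smul_mem_of_add_smul_mem_closure (hconv : Convex ℝ s) (hs : IsOpen s)
    (hy : y ∈ s) (ht : y + t • v ∈ closure s) (hr : 0 ≤ r) (hrt : r < t) : y + r • v ∈ s := by
  have ht0 : t ≠ 0 := (hr.trans_lt hrt).ne'
  have hparam : 1 - r / t ∈ Set.Ioc (0 : ℝ) 1 :=
    ⟨sub_pos.2 ((div_lt_one (hr.trans_lt hrt)).2 hrt),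
      sub_le_self _ (div_nonneg hr (hr.trans hrt.le))⟩
  have hmem := hconv.add_smul_sub_mem_interior' ht (hs.interior_eq ▸ hy) hparam
  rw [hs.interior_eq] at hmem
  convert hmem using 1
  match_scalars <;> field_simp <;> ring

theorem Convex.add_smul_mem_iff_lt (hconv : Convex ℝ s) (hs : IsOpen s) (hy : y ∈ s)
    (ht : 0 < t) (hfr : y + t • v ∈ frontier s) (hr : 0 ≤ r) : y + r • v ∈ s ↔ r < t := by
  refine ⟨fun hrs => ?_, hconv.add_smul_mem_of_add_smul_mem_closure hs hy hfr.1 hr⟩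
  by_contra! htr
  have hr0 : 0 < r := ht.trans_le htr
  have hts : y + (t / r) • (r • v) ∈ s :=
    hconv.add_smul_mem hy hrs ⟨by positivity, (div_le_one hr0).2 htr⟩
  rw [smul_smul, div_mul_cancel₀ _ hr0.ne'] at hts
  exact hfr.2 (by rwa [hs.interior_eq])

end Ray

theorem dist_div_dist_add_smul_sub {E : Type*} [NormedAddCommGroup E] [NormedSpace ℝ E]
    {x y : E} (hxy : x ≠ y) {t : ℝ} (ht : 1 < t) :
    dist y (y + t • (x - y)) / dist x (y + t • (x - y)) = t / (t - 1) := by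
  have hx_sub : x - (y + t • (x - y)) = (1 - t) • (x - y) := by module
  rw [dist_self_add_right, dist_eq_norm, hx_sub, norm_smul, norm_smul,
    Real.norm_of_nonneg (by linarith), Real.norm_of_nonpos (by linarith), neg_sub,
    mul_div_mul_right _ _ (norm_ne_zero_iff.2 (sub_ne_zero.2 hxy))]

theorem Real.log_div_sub_one_lt_iff {t ρ : ℝ} (ht : 1 < t) (hρ : 0 < ρ) :
    Real.log (t / (t - 1)) < ρ ↔ 1 + (Real.exp ρ - 1)⁻¹ < t := by
  have ht1 : 0 < t - 1 := sub_pos.2 ht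
  have hρ1 : 0 < Real.exp ρ - 1 := sub_pos.2 (Real.one_lt_exp_iff.2 hρ)
  have hdiv : t / (t - 1) = 1 + (t - 1)⁻¹ := by field_simp; ring
  rw [Real.log_lt_iff_lt_exp (by positivity), hdiv, ← lt_sub_iff_add_lt', inv_lt_comm₀ ht1 hρ1,
    lt_sub_iff_add_lt']

theorem mem_image_sub_smul_sub_iff {𝕜 E : Type*} [Field 𝕜] [AddCommGroup E] [Module 𝕜 E]
    {s : Set E} {x y : E} {k : 𝕜} (hk : k ≠ 0) :
    y ∈ (fun z => x - k • (z - x)) '' s ↔ y + (1 + k⁻¹) • (x - y) ∈ s := by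
  constructor
  · rintro ⟨z, hz, rfl⟩
    convert hz using 1
    match_scalars <;> field_simp <;> ring
  · refine fun h => ⟨_, h, ?_⟩
    match_scalars <;> field_simp <;> ring

theorem funk_lt_iff {n : ℕ} {Ω : Set (EuclideanSpace ℝ (Fin n))} (hopen : IsOpen Ω)
    (hconv : Convex ℝ Ω) {x y : EuclideanSpace ℝ (Fin n)} (hx : x ∈ Ω) (hy : y ∈ Ω) {ρ : ℝ}
    (hρ : 0 < ρ) : funk Ω y x < ρ ↔ y + (1 + (Real.exp ρ - 1)⁻¹) • (x - y) ∈ Ω := by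
  have hx_fr : x ∉ frontier Ω := fun h => h.2 (by rwa [hopen.interior_eq])
  have hc : 1 ≤ 1 + (Real.exp ρ - 1)⁻¹ :=
    le_add_of_nonneg_right (inv_nonneg.2 (sub_nonneg.2 (Real.one_le_exp hρ.le)))
  unfold funk
  split_ifs with h
  · obtain ⟨ht1, hfr⟩ := h.choose_spec
    have ht : 1 < h.choose := ht1.lt_of_ne fun h1 => hx_fr (by simpa [← h1] using hfr)
    have hxy : x ≠ y := by rintro rfl; exact hx_fr (by simpa using hfr)
    rw [dist_div_dist_add_smul_sub hxy ht, Real.log_div_sub_one_lt_iff ht hρ,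
      hconv.add_smul_mem_iff_lt hopen hy (by linarith) hfr (by linarith)]
  · simp only [hρ, true_iff]
    by_contra hout
    obtain ⟨t, ht, hfr⟩ := hopen.exists_mem_frontier_of_mem_of_notMem
      (f := fun t => y + t • (x - y)) (by fun_prop) hc (by simpa) hout
    exact h ⟨t, ht.1, hfr⟩

theorem funk_backward_ball_homothety_general {n : ℕ} (Ω : Set (EuclideanSpace ℝ (Fin n)))
    (hopen : IsOpen Ω) (hconv : Convex ℝ Ω)
    (x : EuclideanSpace ℝ (Fin n)) (hx : x ∈ Ω) (ρ : ℝ) (hρ : 0 < ρ) :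
    {y ∈ Ω | funk Ω y x < ρ}
      = Ω ∩ ((fun z => x - (Real.exp ρ - 1) • (z - x)) '' Ω) := by
  have hk : Real.exp ρ - 1 ≠ 0 := (sub_pos.2 (Real.one_lt_exp_iff.2 hρ)).ne'
  ext y
  simp only [Set.mem_sep_iff, Set.mem_inter_iff, mem_image_sub_smul_sub_iff hk]
  exact and_congr_right fun hy => funk_lt_iff hopen hconv hx hy hρ

theorem funk_backward_ball_homothety {n : ℕ} (Ω : Set (EuclideanSpace ℝ (Fin n)))
    (hopen : IsOpen Ω) (hconv : Convex ℝ Ω) (hne : Ω.Nonempty) (hproper : Ω ≠ Set.univ)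
    (x : EuclideanSpace ℝ (Fin n)) (hx : x ∈ Ω) (ρ : ℝ) (hρ : 0 < ρ) :
    {y ∈ Ω | funk Ω y x < ρ}
      = Ω ∩ ((fun z => x - (Real.exp ρ - 1) • (z - x)) '' Ω) :=
  funk_backward_ball_homothety_general Ω hopen hconv x hx ρ hρ
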